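/- arXiv:1707.08498 — 4 statements merged into one kernel-verified Lean document; each statement's English description precedes it below -/
import Mathlib

section
/- Let γ > 0, λ > 0, β > 0, C > 0, n ≥ 2, and let α satisfy max{1 - γ/2, 0} < α < 1 + γ/2. Define v(r) = e^{-β r^α} and let F : (0,∞) → ℝ satisfy F(r) ≥ (C(n-1)/r)(1+r)^{1+γ/2} for all r > 0. Then there exists R₀ > 0 such that for all r ≥ R₀, v''(r) + F(r)·v'(r) + λ·v(r) ≤ 0. -/
open Real

private lemma aux_rpow_ge (A δ r : ℝ) (hA : 0 ≤ A) (hδ : 0 < δ)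
    (hr : A ^ (1/δ) ≤ r) : A ≤ r ^ δ := by
  have h0 : (0:ℝ) ≤ A ^ (1/δ) := Real.rpow_nonneg hA _
  have h1 : (A ^ (1/δ)) ^ δ ≤ r ^ δ := Real.rpow_le_rpow h0 hr hδ.le
  calc A = A ^ ((1/δ) * δ) := by rw [one_div_mul_cancel hδ.ne', Real.rpow_one]
    _ = (A ^ (1/δ)) ^ δ := Real.rpow_mul hA _ _
    _ ≤ r ^ δ := h1

set_option maxHeartbeats 1000000 in
theorem stmt_6 (n : ℕ) (hn : 2 ≤ n) (γ lam β C α : ℝ)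
    (hγ : 0 < γ) (hlam : 0 < lam) (hβ : 0 < β) (hC : 0 < C)
    (hα₁ : max (1 - γ / 2) 0 < α) (hα₂ : α < 1 + γ / 2)
    (F : ℝ → ℝ)
    (hF : ∀ r > (0:ℝ), C * (n - 1) / r * (1 + r) ^ (1 + γ / 2) ≤ F r) :
    ∃ R₀ > (0:ℝ), ∀ r ≥ R₀,
      deriv (deriv (fun r : ℝ => Real.exp (-β * r ^ α))) r +
        F r * deriv (fun r : ℝ => Real.exp (-β * r ^ α)) r +
        lam * Real.exp (-β * r ^ α) ≤ 0 := by
  have hα0 : 0 < α := lt_of_le_of_lt (le_max_right _ _) hα₁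
  have hα1 : 1 - γ/2 < α := lt_of_le_of_lt (le_max_left _ _) hα₁
  have hδ1 : 0 < 1 + γ/2 - α := by linarith
  have hδ2 : 0 < α - 1 + γ/2 := by linarith
  have hβαC : 0 < β * α * C := by positivity
  have hn1 : (1:ℝ) ≤ (n:ℝ) - 1 := by
    have : (2:ℝ) ≤ (n:ℝ) := by exact_mod_cast hn
    linarith
  set K : ℝ := β^2*α^2 + β*α*|α-1| with hKdef
  have hK : 0 ≤ K := by positivity
  set M1 : ℝ := 2*K/(β*α*C) with hM1def
  set M2 : ℝ := 2*lam/(β*α*C) with hM2def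
  have hM1 : 0 ≤ M1 := by positivity
  have hM2 : 0 ≤ M2 := by positivity
  refine ⟨max 1 (max (M1 ^ (1/(1 + γ/2 - α))) (M2 ^ (1/(α - 1 + γ/2)))),
    lt_max_iff.mpr (Or.inl one_pos), ?_⟩
  intro r hr
  have hr1 : 1 ≤ r := le_trans (le_max_left _ _) hr
  have hr0 : 0 < r := lt_of_lt_of_le one_pos hr1
  -- the chosen bounds
  have hrM1 : M1 ≤ r ^ (1 + γ/2 - α) :=
    aux_rpow_ge _ _ _ hM1 hδ1 (le_trans (le_trans (le_max_left _ _) (le_max_right _ _)) hr)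
  have hrM2 : M2 ≤ r ^ (α - 1 + γ/2) :=
    aux_rpow_ge _ _ _ hM2 hδ2 (le_trans (le_trans (le_max_right _ _) (le_max_right _ _)) hr)
  have hK1 : 2*K ≤ β*α*C * r ^ (1 + γ/2 - α) := by
    rw [hM1def, div_le_iff₀ hβαC] at hrM1; linarith [hrM1]
  have hlam2 : 2*lam ≤ β*α*C * r ^ (α - 1 + γ/2) := by
    rw [hM2def, div_le_iff₀ hβαC] at hrM2; linarith [hrM2]
  -- derivatives
  have hv : ∀ x : ℝ, 0 < x → HasDerivAt (fun s : ℝ => Real.exp (-β * s ^ α))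
      (Real.exp (-β * x ^ α) * (-β * (α * x ^ (α-1)))) x := by
    intro x hx
    exact ((Real.hasDerivAt_rpow_const (Or.inl hx.ne')).const_mul (-β)).exp
  have hev : deriv (fun s : ℝ => Real.exp (-β * s ^ α)) =ᶠ[nhds r]
      (fun x : ℝ => Real.exp (-β * x ^ α) * (-β * (α * x ^ (α-1)))) := by
    filter_upwards [eventually_gt_nhds hr0] with x hx
    exact (hv x hx).deriv
  have hg' : HasDerivAt (fun x : ℝ => Real.exp (-β * x ^ α) * (-β * (α * x ^ (α-1))))
      (Real.exp (-β * r ^ α) * (-β * (α * r ^ (α-1))) * (-β * (α * r ^ (α-1)))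
        + Real.exp (-β * r ^ α) * (-β * (α * ((α-1) * r ^ (α-1-1))))) r := by
    have h2 : HasDerivAt (fun x : ℝ => -β * (α * x ^ (α-1)))
        (-β * (α * ((α-1) * r ^ (α-1-1)))) r :=
      (((Real.hasDerivAt_rpow_const (p := α-1) (Or.inl hr0.ne')).const_mul α).const_mul (-β))
    exact (hv r hr0).mul h2
  have hdd : deriv (deriv (fun s : ℝ => Real.exp (-β * s ^ α))) r =
      Real.exp (-β * r ^ α) * (-β * (α * r ^ (α-1))) * (-β * (α * r ^ (α-1)))
        + Real.exp (-β * r ^ α) * (-β * (α * ((α-1) * r ^ (α-1-1)))) := by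
    rw [hev.deriv_eq]; exact hg'.deriv
  rw [hdd, (hv r hr0).deriv]
  set E := Real.exp (-β * r ^ α) with hEdef
  set a := r ^ (α-1) with hadef
  set b := r ^ (α-1-1) with hbdef
  set c := r ^ (γ/2) with hcdef
  have hEpos : 0 < E := Real.exp_pos _
  have ha : 0 < a := Real.rpow_pos_of_pos hr0 _
  have hb : 0 < b := Real.rpow_pos_of_pos hr0 _
  have hcpos : 0 < c := Real.rpow_pos_of_pos hr0 _
  have hb_le : b ≤ a * a := by
    rw [hadef, hbdef, ← Real.rpow_add hr0]
    exact Real.rpow_le_rpow_of_exponent_le hr1 (by linarith)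
  have hac : a * c = r ^ (α - 1 + γ/2) := by
    rw [hadef, hcdef, ← Real.rpow_add hr0]
  have hsplit : r ^ (α - 1 + γ/2) = (a * a) * r ^ (1 + γ/2 - α) := by
    rw [hadef, ← Real.rpow_add hr0, ← Real.rpow_add hr0]
    ring_nf
  -- bound on F r
  have hFr : C * ((n:ℝ) - 1) * c ≤ F r := by
    refine le_trans ?_ (hF r hr0)
    rw [div_mul_eq_mul_div, le_div_iff₀ hr0]
    have h1r : r ^ (1+γ/2) ≤ (1+r) ^ (1+γ/2) :=
      Real.rpow_le_rpow hr0.le (by linarith) (by linarith)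
    calc C * ((n:ℝ)-1) * c * r = C*((n:ℝ)-1) * (r ^ (1+γ/2)) := by
          rw [Real.rpow_add hr0, Real.rpow_one]; ring
      _ ≤ C*((n:ℝ)-1) * ((1+r)^(1+γ/2)) := by
          apply mul_le_mul_of_nonneg_left h1r (by nlinarith)
  -- key algebraic inequality
  have key : β^2*α^2*(a*a) - β*α*(α-1)*b - F r * (β*α*a) + lam ≤ 0 := by
    have h1 : K * (a*a) + lam ≤ β*α*C * (a*c) := by
      rw [hac, hsplit]
      have e1 : (2*K) * (a*a) ≤ (β*α*C * r ^ (1 + γ/2 - α)) * (a*a) :=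
        mul_le_mul_of_nonneg_right hK1 (by positivity)
      have e2 : 2*lam ≤ β*α*C * ((a*a) * r ^ (1 + γ/2 - α)) := by
        calc 2*lam ≤ β*α*C * r ^ (α - 1 + γ/2) := hlam2
          _ = β*α*C * ((a*a) * r ^ (1 + γ/2 - α)) := by rw [hsplit]
      nlinarith [e1, e2]
    have h2 : β*α*C * (a*c) ≤ F r * (β*α*a) := by
      have e1 : C * (c*a) ≤ (C*((n:ℝ)-1)) * (c*a) :=
        mul_le_mul_of_nonneg_right (by nlinarith) (by positivity)
      have e2 : (C*((n:ℝ)-1)*c) * (β*α*a) ≤ F r * (β*α*a) :=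
        mul_le_mul_of_nonneg_right hFr (by positivity)
      have e3 : β*α*C * (a*c) ≤ (C*((n:ℝ)-1)*c) * (β*α*a) := by
        have := mul_le_mul_of_nonneg_left e1 (by positivity : (0:ℝ) ≤ β*α)
        nlinarith [this]
      linarith [e2, e3]
    have habs : β*α*(-(α-1)*b) ≤ β*α*(|α-1| * (a*a)) := by
      apply mul_le_mul_of_nonneg_left _ (by positivity : (0:ℝ) ≤ β*α)
      calc -(α-1)*b ≤ |α-1| * b :=
            mul_le_mul_of_nonneg_right (neg_le_abs (α-1)) hb.le
        _ ≤ |α-1| * (a*a) := mul_le_mul_of_nonneg_left hb_le (abs_nonneg _)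
    rw [hKdef] at h1
    nlinarith [h1, h2, habs]
  calc E * (-β * (α * a)) * (-β * (α * a)) + E * (-β * (α * ((α-1) * b)))
        + F r * (E * (-β * (α * a))) + lam * E
      = E * (β^2*α^2*(a*a) - β*α*(α-1)*b - F r * (β*α*a) + lam) := by ring
    _ ≤ 0 := mul_nonpos_iff.mpr (Or.inl ⟨hEpos.le, key⟩)
end

section
/- Let n ≥ 2, C > 0, λ > 0, α ∈ (0,1), β > 0 with γ > 0, max{1-γ/2,0} < α, and suppose α²β² + (α - α² - αC(n-1))β + λ ≤ 0. Define φ(r) = α(1-α)β + α²β²r^α - αβC(n-1)(1+r)^{1+γ/2} + λr^{2-α}. Then φ(r) ≤ 0 for all r ∈ (0,1]. -/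
open Real Set

theorem stmt_9 (n : ℕ) (hn : 2 ≤ n) (C lam γ β α : ℝ)
    (hC : 0 < C) (hlam : 0 < lam) (hγ : 0 < γ) (hβ : 0 < β)
    (hα₁ : max (1 - γ / 2) 0 < α) (hα₂ : α < 1)
    (hquad : α ^ 2 * β ^ 2 + (α - α ^ 2 - α * C * (n - 1)) * β + lam ≤ 0) :
    ∀ r ∈ Ioc (0:ℝ) 1,
      α * (1 - α) * β + α ^ 2 * β ^ 2 * r ^ α -
        α * β * C * (n - 1) * (1 + r) ^ (1 + γ / 2) + lam * r ^ (2 - α) ≤ 0 := by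
  intro r hr
  obtain ⟨hr0, hr1⟩ := hr
  have hα0 : 0 < α := lt_of_le_of_lt (le_max_right _ _) hα₁
  have h1 : r ^ α ≤ 1 := Real.rpow_le_one hr0.le hr1 hα0.le
  have h2 : r ^ (2 - α) ≤ 1 := Real.rpow_le_one hr0.le hr1 (by linarith)
  have h3 : (1 : ℝ) ≤ (1 + r) ^ (1 + γ / 2) :=
    Real.one_le_rpow (by linarith) (by linarith)
  have hn1 : (1 : ℝ) ≤ (n : ℝ) - 1 := by
    have : (2 : ℝ) ≤ (n : ℝ) := by exact_mod_cast hn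
    linarith
  have hc1 : 0 < α * β * C * ((n : ℝ) - 1) := by positivity
  have e1 : α ^ 2 * β ^ 2 * r ^ α ≤ α ^ 2 * β ^ 2 := by nlinarith [sq_nonneg (α * β)]
  have e2 : lam * r ^ (2 - α) ≤ lam := by nlinarith
  have e3 : α * β * C * ((n : ℝ) - 1) ≤ α * β * C * ((n : ℝ) - 1) * (1 + r) ^ (1 + γ / 2) := by
    nlinarith
  nlinarith
end

section
/- Let n ≥ 2, C > 0, λ > 0, γ > 0, β > 0, and α with max{1-γ/2,0} < α < 1 satisfying α²β² + (α - α² - αC(n-1))β + λ ≤ 0. Then α²β² - αβC(n-1) + λ ≤ -α(1-α)β < 0, and for every r > 1, φ(r) = α(1-α)β + α²β²r^α - αβC(n-1)(1+r)^{1+γ/2} + λr^{2-α} ≤ 0. -/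
open Real

theorem stmt_10 (n : ℕ) (hn : 2 ≤ n) (C lam γ β α : ℝ)
    (hC : 0 < C) (hlam : 0 < lam) (hγ : 0 < γ) (hβ : 0 < β)
    (hα₁ : max (1 - γ / 2) 0 < α) (hα₂ : α < 1)
    (hquad : α ^ 2 * β ^ 2 + (α - α ^ 2 - α * C * (n - 1)) * β + lam ≤ 0) :
    (α ^ 2 * β ^ 2 - α * β * C * (n - 1) + lam ≤ -(α * (1 - α) * β)) ∧
    (-(α * (1 - α) * β) < 0) ∧
    (∀ r > (1:ℝ),
      α * (1 - α) * β + α ^ 2 * β ^ 2 * r ^ α -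
        α * β * C * (n - 1) * (1 + r) ^ (1 + γ / 2) + lam * r ^ (2 - α) ≤ 0) := by
  have hα0 : 0 < α := lt_of_le_of_lt (le_max_right _ _) hα₁
  have hαγ : 1 - γ / 2 < α := lt_of_le_of_lt (le_max_left _ _) hα₁
  have hn1 : (1:ℝ) ≤ (n:ℝ) - 1 := by
    have : (2:ℝ) ≤ n := by exact_mod_cast hn
    linarith
  have h1 : α ^ 2 * β ^ 2 - α * β * C * (n - 1) + lam ≤ -(α * (1 - α) * β) := by nlinarith
  have hpos : 0 < α * (1 - α) * β := mul_pos (mul_pos hα0 (by linarith)) hβ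
  have h2 : -(α * (1 - α) * β) < 0 := neg_neg_of_pos hpos
  refine ⟨h1, h2, fun r hr => ?_⟩
  have hr0 : (0:ℝ) < r := by linarith
  have hr1 : (1:ℝ) ≤ r := le_of_lt hr
  have hA : r ^ α ≤ r ^ (2 - α) :=
    Real.rpow_le_rpow_of_exponent_le hr1 (by linarith)
  have hB : r ^ (2 - α) ≤ (1 + r) ^ (1 + γ / 2) := by
    calc r ^ (2 - α) ≤ r ^ (1 + γ / 2) :=
          Real.rpow_le_rpow_of_exponent_le hr1 (by linarith)
      _ ≤ (1 + r) ^ (1 + γ / 2) :=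
          Real.rpow_le_rpow (le_of_lt hr0) (by linarith) (by linarith)
  have hC' : (1:ℝ) ≤ r ^ (2 - α) := by
    calc (1:ℝ) = r ^ (0:ℝ) := (Real.rpow_zero r).symm
      _ ≤ r ^ (2 - α) := Real.rpow_le_rpow_of_exponent_le hr1 (by linarith)
  have hcoef : 0 < α * β * C * ((n:ℝ) - 1) := mul_pos (mul_pos (mul_pos hα0 hβ) hC) (by linarith)
  nlinarith [mul_le_mul_of_nonneg_left hA (by positivity : (0:ℝ) ≤ α ^ 2 * β ^ 2),
    mul_le_mul_of_nonneg_left hB (le_of_lt hcoef),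
    mul_le_mul_of_nonneg_left hC' (le_of_lt hpos),
    mul_le_mul_of_nonneg_right h1 (le_trans zero_le_one hC')]
end

section
/- Let γ > 2, α > 0, C > 0, n ≥ 2, λ > 0, and let ζ(r) = r^{-α}. Let F : (0,∞) → ℝ satisfy F(r) ≥ (C(n-1)/r)(1+r)^{1+γ/2}. Then there exists R₀ > 0 such that ζ''(r) + F(r)·ζ'(r) + λ·ζ(r) ≤ 0 for all r ≥ R₀. -/
/-!
For `r ≥ 1` the hypothesis gives `F r ≥ C r ^ (γ/2)`, so the drift term `F ζ'` is at most
`-α C r ^ (γ/2 - 1) · r ^ (-α)`, while `ζ'' + λ ζ ≤ (α(α+1) + λ) r ^ (-α)`. Since `γ/2 - 1 > 0`,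
the factor `r ^ (γ/2 - 1)` eventually exceeds the constant `(α(α+1) + λ) / (α C)`.
-/

open Real Filter

lemma deriv_deriv_rpow_const (x p : ℝ) :
    deriv (deriv fun x : ℝ => x ^ p) x = p * (p - 1) * x ^ (p - 2) := by
  rw [deriv_rpow_const', deriv_const_mul_field, Real.deriv_rpow_const, sub_sub, one_add_one_eq_two,
    mul_assoc]

lemma rpow_le_inv_mul_one_add_rpow {r s : ℝ} (hr : 0 < r) (hs : 0 ≤ s) :
    r ^ s ≤ r⁻¹ * (1 + r) ^ (1 + s) := by
  calc r ^ s = r⁻¹ * r ^ (1 + s) := by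
        rw [rpow_add hr, rpow_one, inv_mul_cancel_left₀ hr.ne']
    _ ≤ r⁻¹ * (1 + r) ^ (1 + s) := by gcongr; linarith

lemma rpow_neg_supersolution_of_le {α K s lam f r : ℝ} (hα : 0 ≤ α) (hr : 1 ≤ r)
    (hf : K * r ^ s ≤ f) (habsorb : α * (α + 1) + lam ≤ α * K * r ^ (s - 1)) :
    -α * (-α - 1) * r ^ (-α - 2) + f * (-α * r ^ (-α - 1)) + lam * r ^ (-α) ≤ 0 := by
  have hr0 : 0 < r := one_pos.trans_le hr
  have hsplit : r ^ (s - 1) * r ^ (-α) = r ^ s * r ^ (-α - 1) := by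
    rw [← rpow_add hr0, ← rpow_add hr0]; ring_nf
  calc -α * (-α - 1) * r ^ (-α - 2) + f * (-α * r ^ (-α - 1)) + lam * r ^ (-α)
      = α * (α + 1) * r ^ (-α - 2) + lam * r ^ (-α) - α * f * r ^ (-α - 1) := by ring
    _ ≤ (α * (α + 1) + lam) * r ^ (-α) - α * f * r ^ (-α - 1) := by
        have hsecond : r ^ (-α - 2) ≤ r ^ (-α) := rpow_le_rpow_of_exponent_le hr (by linarith)
        linarith [mul_le_mul_of_nonneg_left hsecond (by positivity : 0 ≤ α * (α + 1))]
    _ ≤ α * K * r ^ (s - 1) * r ^ (-α) - α * f * r ^ (-α - 1) := by gcongr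
    _ = α * (K * r ^ s - f) * r ^ (-α - 1) := by rw [mul_assoc _ (r ^ (s - 1)), hsplit]; ring
    _ ≤ 0 := mul_nonpos_of_nonpos_of_nonneg
        (mul_nonpos_of_nonneg_of_nonpos hα (sub_nonpos.2 hf)) (by positivity)

theorem stmt_12_general (n : ℕ) (hn : 2 ≤ n) (γ α C lam : ℝ)
    (hγ : 2 < γ) (hα : 0 < α) (hC : 0 < C)
    (F : ℝ → ℝ)
    (hF : ∀ r > (0:ℝ), C * (n - 1) / r * (1 + r) ^ (1 + γ / 2) ≤ F r) :
    ∃ R₀ > (0:ℝ), ∀ r ≥ R₀,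
      deriv (deriv (fun r : ℝ => r ^ (-α))) r +
        F r * deriv (fun r : ℝ => r ^ (-α)) r +
        lam * r ^ (-α) ≤ 0 := by
  have hs : 1 < γ / 2 := by linarith
  have hn1 : (1 : ℝ) ≤ n - 1 := by
    have : (2 : ℝ) ≤ n := by exact_mod_cast hn
    linarith
  have hFpow : ∀ r > (0 : ℝ), C * r ^ (γ / 2) ≤ F r := fun r hr =>
    calc C * r ^ (γ / 2) ≤ C * (r⁻¹ * (1 + r) ^ (1 + γ / 2)) := by
          gcongr; exact rpow_le_inv_mul_one_add_rpow hr (by linarith)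
      _ ≤ C * (n - 1) / r * (1 + r) ^ (1 + γ / 2) := by
          rw [mul_div_assoc, div_eq_mul_inv, mul_assoc]
          gcongr
          exact le_mul_of_one_le_left (by positivity) hn1
      _ ≤ F r := hF r hr
  obtain ⟨a, habsorb⟩ := eventually_atTop.mp
    (((tendsto_rpow_atTop (sub_pos.2 hs)).const_mul_atTop (mul_pos hα hC)).eventually_ge_atTop
      (α * (α + 1) + lam))
  refine ⟨max a 1, by positivity, fun r hr => ?_⟩
  have hr1 : 1 ≤ r := (le_max_right a 1).trans hr
  rw [deriv_deriv_rpow_const, Real.deriv_rpow_const]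
  exact rpow_neg_supersolution_of_le hα.le hr1 (hFpow r (one_pos.trans_le hr1))
    (habsorb r ((le_max_left a 1).trans hr))

theorem stmt_12 (n : ℕ) (hn : 2 ≤ n) (γ α C lam : ℝ)
    (hγ : 2 < γ) (hα : 0 < α) (hC : 0 < C) (hlam : 0 < lam)
    (F : ℝ → ℝ)
    (hF : ∀ r > (0:ℝ), C * (n - 1) / r * (1 + r) ^ (1 + γ / 2) ≤ F r) :
    ∃ R₀ > (0:ℝ), ∀ r ≥ R₀,
      deriv (deriv (fun r : ℝ => r ^ (-α))) r +
        F r * deriv (fun r : ℝ => r ^ (-α)) r +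
        lam * r ^ (-α) ≤ 0 :=
  stmt_12_general n hn γ α C lam hγ hα hC F hF
end
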